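/- Define a₁^± = (1/(2√3))[c₁⁻ − c₁⁺, c₂^±], a₂^± = (i/(2√3))[c₁⁻ + c₁⁺, c₂^±], a₃^± = (1/√3)c₂^±, where c₁^± = f^±, c₂^± = b^± are the 5×5 matrices above. Then for each k ∈ {1,2,3}: Σᵢ₌₁³ [{aᵢ⁺, aᵢ⁻}, a_k^±] = ±2 a_k^± (the compatibility conditions for the Wigner quantum oscillator). -/

import Mathlib

open Matrix Complex

noncomputable section

abbrev M5 := Matrix (Fin 5) (Fin 5) ℂ

def E (i j : Fin 5) : M5 := Matrix.single i j 1

def fp : M5 := (Real.sqrt 2 : ℂ) • (E 0 2 - E 2 1)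
def fm : M5 := (Real.sqrt 2 : ℂ) • (E 2 0 - E 1 2)
def bp : M5 := (Real.sqrt 2 : ℂ) • (E 2 4 + E 3 2)
def bm : M5 := (Real.sqrt 2 : ℂ) • (E 2 3 - E 4 2)

def lb (A B : M5) : M5 := A * B - B * A
def ab (A B : M5) : M5 := A * B + B * A

def s3 : ℂ := (Real.sqrt 3 : ℂ)

def aP : Fin 3 → M5 :=
  ![ (1/(2*s3)) • lb (fm - fp) bp,
     (Complex.I/(2*s3)) • lb (fm + fp) bp,
     (1/s3) • bp ]

def aM : Fin 3 → M5 :=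
  ![ (1/(2*s3)) • lb (fm - fp) bm,
     (Complex.I/(2*s3)) • lb (fm + fp) bm,
     (1/s3) • bm ]

/-!
Put `H = diag(0, 0, 0, 1, -1)`. The adjoint action of a diagonal matrix multiplies `E i j` by
`H i i - H j j`, so `f⁺` and `f⁻` commute with `H` while `b^±` have weight `±1`. Since `ad H` is a
derivation, the brackets `[c₁⁻ ∓ c₁⁺, c₂^±]` have weight `±1` as well, hence so does every `a_k^±`.
A direct computation with matrix units gives `Σᵢ {aᵢ⁺, aᵢ⁻} = 2H`, and the conditions follow.
-/

attribute [local instance] LieRing.ofAssociativeRing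

theorem Matrix.lie_diagonal_single {n R : Type*} [Fintype n] [DecidableEq n] [CommRing R]
    (d : n → R) (i j : n) (c : R) :
    ⁅diagonal d, single i j c⁆ = (d i - d j) • single i j c := by
  ext a b
  simp only [Ring.lie_def, sub_apply, diagonal_mul, mul_diagonal, smul_apply, single_apply,
    smul_eq_mul]
  split_ifs with h
  · obtain ⟨rfl, rfl⟩ := h
    ring
  · simp

theorem lie_lie_eq_smul_of_lie_eq_zero {R L : Type*} [CommRing R] [LieRing L] [LieAlgebra R L]
    {h x y : L} {c : R} (hx : ⁅h, x⁆ = 0) (hy : ⁅h, y⁆ = c • y) : ⁅h, ⁅x, y⁆⁆ = c • ⁅x, y⁆ := by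
  rw [leibniz_lie, hx, zero_lie, zero_add, hy, lie_smul]

theorem lb_eq_lie (A B : M5) : lb A B = ⁅A, B⁆ := rfl

theorem E_mul_E (i j k l : Fin 5) : E i j * E k l = if j = k then E i l else 0 := by
  split_ifs with h
  · subst h
    simp [E]
  · exact single_mul_single_of_ne _ _ _ _ h _

theorem ofReal_sqrt_two_mul_self : ((Real.sqrt 2 : ℝ) : ℂ) * ((Real.sqrt 2 : ℝ) : ℂ) = 2 := by
  rw [← ofReal_mul, Real.mul_self_sqrt zero_le_two, ofReal_ofNat]

theorem s3_mul_self : s3 * s3 = 3 := by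
  rw [s3, ← ofReal_mul, Real.mul_self_sqrt zero_le_three, ofReal_ofNat]

theorem s3_ne_zero : s3 ≠ 0 := by
  intro h
  simpa [h] using s3_mul_self

theorem ab_smul_smul (a b : ℂ) (A B : M5) : ab (a • A) (b • B) = (a * b) • ab A B := by
  simp only [ab, smul_mul_smul_comm, mul_comm b a, smul_add]

def hamiltonian : M5 := diagonal ![0, 0, 0, 1, -1]

theorem hamiltonian_eq : hamiltonian = E 3 3 - E 4 4 := by
  ext i j
  fin_cases i <;> fin_cases j <;> simp [hamiltonian, E]

theorem lie_hamiltonian_E (i j : Fin 5) :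
    ⁅hamiltonian, E i j⁆ = (![0, 0, 0, 1, -1] i - ![0, 0, 0, 1, -1] j : ℂ) • E i j :=
  lie_diagonal_single _ i j 1

theorem lie_hamiltonian_fm_sub_fp : ⁅hamiltonian, fm - fp⁆ = 0 := by
  simp only [fm, fp, lie_sub, lie_smul, lie_hamiltonian_E, cons_val]
  module

theorem lie_hamiltonian_fm_add_fp : ⁅hamiltonian, fm + fp⁆ = 0 := by
  simp only [fm, fp, lie_add, lie_sub, lie_smul, lie_hamiltonian_E, cons_val]
  module

theorem lie_hamiltonian_bp : ⁅hamiltonian, bp⁆ = (1 : ℂ) • bp := by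
  simp only [bp, lie_add, lie_smul, lie_hamiltonian_E, cons_val]
  module

theorem lie_hamiltonian_bm : ⁅hamiltonian, bm⁆ = (-1 : ℂ) • bm := by
  simp only [bm, lie_sub, lie_smul, lie_hamiltonian_E, cons_val]
  module

theorem lie_hamiltonian_aP (k : Fin 3) : ⁅hamiltonian, aP k⁆ = (1 : ℂ) • aP k := by
  fin_cases k <;>
    simp only [aP, Fin.zero_eta, Fin.mk_one, Fin.reduceFinMk, cons_val, lb_eq_lie, lie_smul,
      lie_lie_eq_smul_of_lie_eq_zero lie_hamiltonian_fm_sub_fp lie_hamiltonian_bp,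
      lie_lie_eq_smul_of_lie_eq_zero lie_hamiltonian_fm_add_fp lie_hamiltonian_bp,
      lie_hamiltonian_bp, smul_comm _ (1 : ℂ)]

theorem lie_hamiltonian_aM (k : Fin 3) : ⁅hamiltonian, aM k⁆ = (-1 : ℂ) • aM k := by
  fin_cases k <;>
    simp only [aM, Fin.zero_eta, Fin.mk_one, Fin.reduceFinMk, cons_val, lb_eq_lie, lie_smul,
      lie_lie_eq_smul_of_lie_eq_zero lie_hamiltonian_fm_sub_fp lie_hamiltonian_bm,
      lie_lie_eq_smul_of_lie_eq_zero lie_hamiltonian_fm_add_fp lie_hamiltonian_bm,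
      lie_hamiltonian_bm, smul_comm _ (-1 : ℂ)]

theorem aP_zero : aP 0 = (-1 / s3) • (E 0 4 + E 1 4 + E 3 0 + E 3 1) := by
  simp only [aP, cons_val_zero, lb, fm, fp, bp, ← smul_sub, smul_mul_smul_comm,
    ofReal_sqrt_two_mul_self, smul_smul, add_mul, mul_add, sub_mul, mul_sub, E_mul_E,
    Fin.reduceEq, ↓reduceIte]
  module

theorem aP_one : aP 1 = (I / s3) • (E 0 4 - E 1 4 - E 3 0 + E 3 1) := by
  simp only [aP, cons_val_one, cons_val_zero, lb, fm, fp, bp, ← smul_add, smul_mul_smul_comm,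
    ofReal_sqrt_two_mul_self, smul_smul, add_mul, mul_add, sub_mul, mul_sub, E_mul_E,
    Fin.reduceEq, ↓reduceIte]
  module

theorem aP_two : aP 2 = ((Real.sqrt 2 : ℂ) / s3) • (E 2 4 + E 3 2) := by
  rw [show aP 2 = (1 / s3) • bp from rfl, bp, smul_smul, one_div_mul_eq_div]

theorem aM_zero : aM 0 = (-1 / s3) • (E 0 3 + E 1 3 - E 4 0 - E 4 1) := by
  simp only [aM, cons_val_zero, lb, fm, fp, bm, ← smul_sub, smul_mul_smul_comm,
    ofReal_sqrt_two_mul_self, smul_smul, add_mul, mul_add, sub_mul, mul_sub, E_mul_E,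
    Fin.reduceEq, ↓reduceIte]
  module

theorem aM_one : aM 1 = (I / s3) • (E 0 3 - E 1 3 + E 4 0 - E 4 1) := by
  simp only [aM, cons_val_one, cons_val_zero, lb, fm, fp, bm, ← smul_add, ← smul_sub,
    smul_mul_smul_comm, ofReal_sqrt_two_mul_self, smul_smul, add_mul, mul_add, sub_mul, mul_sub,
    E_mul_E, Fin.reduceEq, ↓reduceIte]
  module

theorem aM_two : aM 2 = ((Real.sqrt 2 : ℂ) / s3) • (E 2 3 - E 4 2) := by
  rw [show aM 2 = (1 / s3) • bm from rfl, bm, smul_smul, one_div_mul_eq_div]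

theorem sum_ab_aP_aM : ∑ i, ab (aP i) (aM i) = (2 : ℂ) • hamiltonian := by
  have h₀ : ab (E 0 4 + E 1 4 + E 3 0 + E 3 1) (E 0 3 + E 1 3 - E 4 0 - E 4 1)
      = (2 : ℂ) • hamiltonian := by
    simp only [ab, hamiltonian_eq, add_mul, mul_add, sub_mul, mul_sub, E_mul_E, Fin.reduceEq,
      ↓reduceIte]
    module
  have h₁ : ab (E 0 4 - E 1 4 - E 3 0 + E 3 1) (E 0 3 - E 1 3 + E 4 0 - E 4 1)
      = (-2 : ℂ) • hamiltonian := by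
    simp only [ab, hamiltonian_eq, add_mul, mul_add, sub_mul, mul_sub, E_mul_E, Fin.reduceEq,
      ↓reduceIte]
    module
  have h₂ : ab (E 2 4 + E 3 2) (E 2 3 - E 4 2) = hamiltonian := by
    simp only [ab, hamiltonian_eq, add_mul, mul_add, sub_mul, mul_sub, E_mul_E, Fin.reduceEq,
      ↓reduceIte]
    module
  rw [Fin.sum_univ_three, aP_zero, aM_zero, aP_one, aM_one, aP_two, aM_two, ab_smul_smul,
    ab_smul_smul, ab_smul_smul, h₀, h₁, h₂]
  simp only [smul_smul, ← add_smul]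
  congr 1
  have := s3_ne_zero
  field_simp
  linear_combination (-2 : ℂ) * I_mul_I + ofReal_sqrt_two_mul_self - 2 * s3_mul_self

/-- Wigner compatibility conditions: Σᵢ [{aᵢ⁺, aᵢ⁻}, a_k^±] = ±2 a_k^±. -/
theorem wigner_compatibility (k : Fin 3) :
    (∑ i : Fin 3, lb (ab (aP i) (aM i)) (aP k)) = (2 : ℂ) • aP k ∧
    (∑ i : Fin 3, lb (ab (aP i) (aM i)) (aM k)) = (-2 : ℂ) • aM k := by
  have lie_sum_ab (X : M5) : ∑ i, lb (ab (aP i) (aM i)) X = (2 : ℂ) • ⁅hamiltonian, X⁆ := by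
    simp only [lb_eq_lie, ← sum_lie, sum_ab_aP_aM, smul_lie]
  rw [lie_sum_ab, lie_sum_ab, lie_hamiltonian_aP, lie_hamiltonian_aM, smul_smul, smul_smul]
  constructor <;> norm_num
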